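/- arXiv:math/0503403 — 3 statements merged into one kernel-verified Lean document; each statement's English description precedes it below -/
import Mathlib

section
/- Let G_1, …, G_ℓ be graphs on the same finite vertex set V, where G_i has m_i edges. Then there exists a bipartition of V into two classes A and B such that for every i = 1, …, ℓ the number of edges of G_i with one endvertex in A and the other in B is at least m_i/2 − √(ℓ·m_i/2). -/
/-!
Encode a bipartition `(A, Aᶜ)` by the spins `±1` of its vertices; an edge is cut exactly when
the product of the spins of its ends is `-1`, so the cut of a graph with `m` edges has size
`(m - S) / 2`, where `S` is the sum of these edge spins. Flipping the spin of a vertex lying on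
an edge `e` but not on another edge `f` shows that the edge spins are orthogonal over all
bipartitions, so the mean of `S²` over all bipartitions is `m`. Averaging `∑ᵢ Sᵢ² / mᵢ` over the
bipartitions gives one with `Sᵢ² ≤ ℓ mᵢ` for every `i` simultaneously, and then
`Sᵢ ≤ √(ℓ mᵢ) ≤ 2 √(ℓ mᵢ / 2)`.
-/

/-- `eBetween G A B` is the number of edges of `G` with one endvertex in `A`
and the other in `B`. -/
def eBetween {V : Type*} [Fintype V] [DecidableEq V] (G : SimpleGraph V)
    [DecidableRel G.Adj] (A B : Finset V) : ℕ :=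
  (G.edgeFinset.filter fun e => ∃ a ∈ A, ∃ b ∈ B, e = s(a, b)).card

open Finset

theorem Fintype.exists_forall_card_mul_sq_le_card_mul_sum_sq {α ι : Type*} [Fintype α]
    [Nonempty α] [Fintype ι] (f : ι → α → ℝ) :
    ∃ x, ∀ i, Fintype.card α * f i x ^ 2 ≤ Fintype.card ι * ∑ y, f i y ^ 2 := by
  set M : ι → ℝ := fun i => ∑ y, f i y ^ 2
  have hM : ∀ i, 0 ≤ M i := fun i => Finset.sum_nonneg fun y _ => sq_nonneg (f i y)
  have hα : (0 : ℝ) < Fintype.card α := by exact_mod_cast Fintype.card_pos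
  have hmean : ∑ x, ∑ i, f i x ^ 2 / M i ≤ ∑ _x : α, (Fintype.card ι / Fintype.card α : ℝ) := by
    rw [sum_comm]
    simp_rw [← sum_div]
    -- `M i / M i` is `0` rather than `1` when `M i = 0`
    calc ∑ i, M i / M i ≤ ∑ _i : ι, (1 : ℝ) := sum_le_sum fun i _ => div_self_le_one _
      _ = _ := by simp
  obtain ⟨x, -, hx⟩ := exists_le_of_sum_le univ_nonempty hmean
  refine ⟨x, fun i => ?_⟩
  rcases (hM i).eq_or_lt with hzero | hpos
  · have : f i x ^ 2 = 0 :=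
      (Finset.sum_eq_zero_iff_of_nonneg fun y _ => sq_nonneg (f i y)).mp hzero.symm x (mem_univ x)
    rw [this, mul_zero]
    exact mul_nonneg (Nat.cast_nonneg _) (hM i)
  · have hi : f i x ^ 2 / M i ≤ Fintype.card ι / Fintype.card α :=
      (single_le_sum (f := fun j => f j x ^ 2 / M j)
        (fun j _ => div_nonneg (sq_nonneg _) (hM j)) (mem_univ i)).trans hx
    rwa [div_le_div_iff₀ hpos hα, mul_comm] at hi

theorem Sym2.exists_mem_notMem_of_ne {α : Type*} {e f : Sym2 α} (he : ¬e.IsDiag) (hef : e ≠ f) :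
    ∃ p ∈ e, p ∉ f := by
  induction e using Sym2.inductionOn with
  | hf a b =>
    by_cases ha : a ∈ f
    · refine ⟨b, Sym2.mem_mk_right a b, fun hb => hef ?_⟩
      exact ((Sym2.mem_and_mem_iff (by simpa using he)).mp ⟨ha, hb⟩).symm
    · exact ⟨a, Sym2.mem_mk_left a b, ha⟩

section Spin

variable {V : Type*} [DecidableEq V]

def spin (A : Finset V) (v : V) : ℝ := if v ∈ A then 1 else -1

def edgeSpin (A : Finset V) : Sym2 V → ℝ :=
  Sym2.lift ⟨fun a b => spin A a * spin A b, fun _ _ => mul_comm _ _⟩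

@[simp]
lemma edgeSpin_mk (A : Finset V) (a b : V) : edgeSpin A s(a, b) = spin A a * spin A b := rfl

lemma spin_mul_self (A : Finset V) (v : V) : spin A v * spin A v = 1 := by
  unfold spin; split_ifs <;> norm_num

lemma edgeSpin_mul_self (A : Finset V) (e : Sym2 V) : edgeSpin A e * edgeSpin A e = 1 := by
  induction e using Sym2.inductionOn with
  | hf a b =>
    rw [edgeSpin_mk, mul_mul_mul_comm, spin_mul_self, spin_mul_self, one_mul]

lemma spin_symmDiff_singleton_self (A : Finset V) (p : V) :
    spin (symmDiff A {p}) p = -spin A p := by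
  by_cases hp : p ∈ A <;> simp [spin, mem_symmDiff, hp]

lemma spin_symmDiff_singleton_of_ne (A : Finset V) {p v : V} (hv : v ≠ p) :
    spin (symmDiff A {p}) v = spin A v := by
  simp [spin, mem_symmDiff, hv]

lemma edgeSpin_symmDiff_singleton_of_mem (A : Finset V) {p : V} {e : Sym2 V} (hp : p ∈ e)
    (he : ¬e.IsDiag) : edgeSpin (symmDiff A {p}) e = -edgeSpin A e := by
  obtain ⟨w, rfl⟩ := Sym2.mem_iff_exists.mp hp
  have hw : w ≠ p := fun h => he (by simp [h])
  simp [spin_symmDiff_singleton_self, spin_symmDiff_singleton_of_ne A hw]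

lemma edgeSpin_symmDiff_singleton_of_notMem (A : Finset V) {p : V} {e : Sym2 V} (hp : p ∉ e) :
    edgeSpin (symmDiff A {p}) e = edgeSpin A e := by
  induction e using Sym2.inductionOn with
  | hf a b =>
    have ha : a ≠ p := fun h => hp (by simp [h])
    have hb : b ≠ p := fun h => hp (by simp [h])
    simp [spin_symmDiff_singleton_of_ne A ha, spin_symmDiff_singleton_of_ne A hb]

variable [Fintype V]

lemma sum_edgeSpin_mul_edgeSpin {e : Sym2 V} (he : ¬e.IsDiag) (f : Sym2 V) :
    ∑ A : Finset V, edgeSpin A e * edgeSpin A f = if e = f then 2 ^ Fintype.card V else 0 := by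
  split_ifs with hef
  · simp [hef, edgeSpin_mul_self, Fintype.card_finset]
  obtain ⟨p, hpe, hpf⟩ := Sym2.exists_mem_notMem_of_ne he hef
  have hflip : ∑ A : Finset V, -(edgeSpin A e * edgeSpin A f) =
      ∑ A : Finset V, edgeSpin A e * edgeSpin A f :=
    Fintype.sum_bijective (fun A => symmDiff A {p})
      (Function.Involutive.bijective fun A => symmDiff_symmDiff_cancel_right {p} A) _ _
      fun A => by
        rw [edgeSpin_symmDiff_singleton_of_mem A hpe he,
          edgeSpin_symmDiff_singleton_of_notMem A hpf, neg_mul]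
  rw [sum_neg_distrib] at hflip
  linarith

lemma sum_sq_sum_edgeSpin {E : Finset (Sym2 V)} (hE : ∀ e ∈ E, ¬e.IsDiag) :
    ∑ A : Finset V, (∑ e ∈ E, edgeSpin A e) ^ 2 = #E * 2 ^ Fintype.card V := by
  calc ∑ A : Finset V, (∑ e ∈ E, edgeSpin A e) ^ 2
      = ∑ e ∈ E, ∑ f ∈ E, ∑ A : Finset V, edgeSpin A e * edgeSpin A f := by
        simp_rw [sq, sum_mul_sum]
        rw [sum_comm]
        exact sum_congr rfl fun e _ => sum_comm
    _ = ∑ e ∈ E, ∑ f ∈ E, if e = f then (2 : ℝ) ^ Fintype.card V else 0 :=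
        sum_congr rfl fun e he => sum_congr rfl fun f _ => sum_edgeSpin_mul_edgeSpin (hE e he) f
    _ = #E * 2 ^ Fintype.card V := by simp

lemma exists_mem_compl_eq_mk_iff (A : Finset V) (u v : V) :
    (∃ a ∈ A, ∃ b ∈ Aᶜ, s(u, v) = s(a, b)) ↔ (u ∈ A ↔ v ∉ A) := by
  constructor
  · rintro ⟨a, ha, b, hb, h⟩
    rw [mem_compl] at hb
    rcases Sym2.eq_iff.mp h with ⟨rfl, rfl⟩ | ⟨rfl, rfl⟩ <;> tauto
  · intro h
    by_cases hu : u ∈ A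
    · exact ⟨u, hu, v, mem_compl.mpr (h.mp hu), rfl⟩
    · exact ⟨v, by tauto, u, mem_compl.mpr hu, Sym2.eq_swap⟩

lemma eBetween_compl_eq (G : SimpleGraph V) [DecidableRel G.Adj] (A : Finset V) :
    (eBetween G A Aᶜ : ℝ) = (#G.edgeFinset - ∑ e ∈ G.edgeFinset, edgeSpin A e) / 2 := by
  rw [eBetween, natCast_card_filter, sub_div, sum_div, card_eq_sum_ones, Nat.cast_sum,
    sum_div, ← sum_sub_distrib]
  refine sum_congr rfl fun e _ => ?_
  induction e using Sym2.inductionOn with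
  | hf u v =>
    simp only [exists_mem_compl_eq_mk_iff]
    by_cases hu : u ∈ A <;> by_cases hv : v ∈ A <;> simp [spin, hu, hv] <;> norm_num

end Spin

/-- Given graphs `G 1, …, G ℓ` on the same finite vertex set `V`, where `G i` has
`m i` edges, there is a bipartition of `V` into classes `A` and `B` such that for
every `i`, the number of edges of `G i` between `A` and `B` is at least
`m i / 2 - √(ℓ * m i / 2)`. -/
theorem simultaneous_bipartition {V : Type*} [Fintype V] [DecidableEq V] (ℓ : ℕ)
    (G : Fin ℓ → SimpleGraph V) [∀ i, DecidableRel (G i).Adj]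
    (m : Fin ℓ → ℕ) (hm : ∀ i, (G i).edgeFinset.card = m i) :
    ∃ A B : Finset V, Disjoint A B ∧ A ∪ B = Finset.univ ∧
      ∀ i, (eBetween (G i) A B : ℝ) ≥ (m i : ℝ) / 2 - Real.sqrt (ℓ * m i / 2) := by
  obtain ⟨A, hA⟩ := Fintype.exists_forall_card_mul_sq_le_card_mul_sum_sq
    fun i (A : Finset V) => ∑ e ∈ (G i).edgeFinset, edgeSpin A e
  refine ⟨A, Aᶜ, disjoint_compl_right, union_compl A, fun i => ?_⟩
  set S := ∑ e ∈ (G i).edgeFinset, edgeSpin A e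
  have hsq : (2 : ℝ) ^ Fintype.card V * S ^ 2 ≤ ℓ * (m i * 2 ^ Fintype.card V) := by
    simpa [S, sum_sq_sum_edgeSpin fun e he => (G i).not_isDiag_of_mem_edgeSet
      (SimpleGraph.mem_edgeFinset.mp he), hm i, Fintype.card_finset] using hA i
  have hS : S ^ 2 ≤ ℓ * m i := by nlinarith [pow_pos (two_pos (α := ℝ)) (Fintype.card V)]
  have hroot := Real.sq_sqrt (by positivity : (0 : ℝ) ≤ ℓ * m i / 2)
  have hS_le : S ≤ 2 * Real.sqrt (ℓ * m i / 2) := by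
    nlinarith [Real.sqrt_nonneg (ℓ * m i / 2)]
  rw [eBetween_compl_eq, hm i]
  linarith
end

section
/- Let k ≥ 2 and 0 < ε ≤ 1/(9ℓ²k⁴). Let G_1, …, G_ℓ be graphs on the same finite vertex set V, where G_i has m_i edges and maximum degree Δ(G_i) ≤ ε·m_i. Then there exists a partition of V into k classes V_1, …, V_k such that for all i = 1, …, ℓ and all 1 ≤ s < t ≤ k one has e_{G_i}(V_s, V_t) ≥ 2m_i/k² − ε^{1/4}·m_i, and for all i and all 1 ≤ s ≤ k one has e_{G_i}(V_s) ≥ m_i/k² − ε^{1/4}·m_i. -/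
/-- `eWithin G S` is the number of edges of `G` with both endvertices in `S`. -/
def eWithin {V : Type*} [Fintype V] [DecidableEq V] (G : SimpleGraph V)
    [DecidableRel G.Adj] (S : Finset V) : ℕ :=
  (G.edgeFinset.filter fun e => ∀ v ∈ e, v ∈ S).card

/-!
Colour the vertices uniformly at random with `k` colours; probabilities are counted over all
`k ^ |V|` colourings. For a graph `G` with `m` edges and colours `s, t`, let `X` be the number of
darts (ordered edges) going from colour `s` to colour `t`. Then `E X = 2m/k²`, and two darts
without a common vertex give independent events, so `Var X ≤ 2m · 4Δ(G) / k² ≤ 8εm²/k²`.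
By Chebyshev, `X < 2m/k² - ε^{1/4} m` for at most a fraction `8√ε/k²` of the colourings, and a
union bound over the `ℓk²` triples `(i, s, t)` leaves a fraction `1 - 8ℓ√ε > 0` of good
colourings. For `s ≠ t` the count `X` is `e(V_s, V_t)`, and for `s = t` it is `2 e(V_s)`.
-/

open Finset

section Colourings
variable {V β : Type*} [Fintype V] [DecidableEq V] [Fintype β] [DecidableEq β]

theorem card_filter_forall_mem_eq_mul_pow (A : Finset V) (σ : V → β) :
    #{f : V → β | ∀ a ∈ A, f a = σ a} * Fintype.card β ^ #A =
      Fintype.card β ^ Fintype.card V := by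
  have hpi : ({f : V → β | ∀ a ∈ A, f a = σ a} : Finset _) =
      Fintype.piFinset fun a => if a ∈ A then {σ a} else univ := by
    ext f
    simp only [mem_filter, mem_univ, true_and, Fintype.mem_piFinset]
    refine ⟨fun h a => ?_, fun h a ha => by simpa [ha] using h a⟩
    split_ifs with ha
    · exact mem_singleton.2 (h a ha)
    · exact mem_univ _
  rw [hpi, Fintype.card_piFinset, ← card_compl_add_card A, pow_add]
  simp [apply_ite, prod_ite, filter_not, compl_eq_univ_sdiff]

theorem card_filter_mul_pow_le_of_eqOn {P : (V → β) → Prop} [DecidablePred P] (A : Finset V)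
    (hP : ∀ f g, P f → P g → Set.EqOn f g A) :
    #{f | P f} * Fintype.card β ^ #A ≤ Fintype.card β ^ Fintype.card V := by
  obtain hP₀ | ⟨g, hg⟩ := ({f | P f} : Finset (V → β)).eq_empty_or_nonempty
  · simp [hP₀]
  rw [← card_filter_forall_mem_eq_mul_pow A g]
  refine Nat.mul_le_mul_right _ (card_le_card (monotone_filter_right _ fun f _ hf => ?_))
  exact hP f g hf (mem_filter.1 hg).2

variable {k : ℕ}

theorem card_filter_apply_eq_and_apply_eq (hk : k ≠ 0) {a b : V} (hab : a ≠ b) (s t : Fin k) :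
    (#{f : V → Fin k | f a = s ∧ f b = t} : ℝ) = k ^ Fintype.card V / k ^ 2 := by
  have hcount := card_filter_forall_mem_eq_mul_pow {a, b} (Function.update (fun _ => t) a s)
  rw [card_pair hab, Fintype.card_fin] at hcount
  rw [eq_div_iff (by positivity)]
  convert congrArg (Nat.cast (R := ℝ)) hcount using 1
  · push_cast
    congr 3
    ext f
    simp [Function.update_apply, hab.symm]
  · push_cast
    rfl

end Colourings

section SecondMoment
variable {Ω ι : Type*} [Fintype Ω] [DecidableEq Ω] (D : Finset ι) (E : ι → Finset Ω)

theorem sum_card_filter_mem_eq_sum_card :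
    ∑ ω, (#{p ∈ D | ω ∈ E p} : ℝ) = ∑ p ∈ D, (#(E p) : ℝ) := by
  simp only [card_filter, Nat.cast_sum, Nat.cast_ite, Nat.cast_one, Nat.cast_zero]
  rw [sum_comm]
  simp

theorem sum_card_filter_mem_sq_eq_sum_card_inter :
    ∑ ω, (#{p ∈ D | ω ∈ E p} : ℝ) ^ 2 = ∑ p ∈ D, ∑ q ∈ D, (#(E p ∩ E q) : ℝ) := by
  simp only [card_filter, Nat.cast_sum, Nat.cast_ite, Nat.cast_one, Nat.cast_zero, sq,
    sum_mul_sum, ite_zero_mul_ite_zero, mul_one]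
  rw [sum_comm]
  refine sum_congr rfl fun p _ => ?_
  rw [sum_comm]
  simp [← mem_inter]

/-- `c ^ 2 / card Ω` is the size `E p ∩ E q` would have if `E p` and `E q` were independent. -/
theorem sum_card_filter_mem_sub_sq_le [Nonempty Ω] (R : ι → ι → Prop)
    [∀ p, DecidablePred (R p)] {c τ : ℝ} (hc : ∀ p ∈ D, (#(E p) : ℝ) = c)
    (hindep : ∀ p ∈ D, ∀ q ∈ D, ¬ R p q → (#(E p ∩ E q) : ℝ) ≤ c ^ 2 / Fintype.card Ω)
    (hdep : ∀ p ∈ D, (#{q ∈ D | R p q} : ℝ) ≤ τ) :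
    ∑ ω, ((#{p ∈ D | ω ∈ E p} : ℝ) - #D * c / Fintype.card Ω) ^ 2 ≤ #D * τ * c := by
  set N : ℝ := (Fintype.card Ω : ℝ)
  have hN : N ≠ 0 := by positivity
  have hexpand : ∑ ω, ((#{p ∈ D | ω ∈ E p} : ℝ) - #D * c / N) ^ 2 =
      ∑ p ∈ D, ∑ q ∈ D, ((#(E p ∩ E q) : ℝ) - c ^ 2 / N) := by
    simp only [sub_sq, sum_add_distrib, sum_sub_distrib, ← sum_mul, ← mul_sum,
      sum_card_filter_mem_sq_eq_sum_card_inter, sum_card_filter_mem_eq_sum_card,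
      sum_congr rfl hc, sum_const, card_univ, nsmul_eq_mul]
    field_simp
    ring
  rw [hexpand, mul_assoc, ← nsmul_eq_mul, ← sum_const]
  refine sum_le_sum fun p hp => ?_
  have hc₀ : 0 ≤ c := hc p hp ▸ Nat.cast_nonneg _
  have hdependent : ∑ q ∈ D with R p q, ((#(E p ∩ E q) : ℝ) - c ^ 2 / N) ≤ τ * c :=
    calc ∑ q ∈ D with R p q, ((#(E p ∩ E q) : ℝ) - c ^ 2 / N)
        ≤ ∑ q ∈ D with R p q, c := sum_le_sum fun q _ => by
          have : (#(E p ∩ E q) : ℝ) ≤ c := hc p hp ▸ mod_cast card_le_card inter_subset_left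
          have : 0 ≤ c ^ 2 / N := by positivity
          linarith
      _ = #{q ∈ D | R p q} * c := by rw [sum_const, nsmul_eq_mul]
      _ ≤ τ * c := mul_le_mul_of_nonneg_right (hdep p hp) hc₀
  have hindependent : ∑ q ∈ D with ¬ R p q, ((#(E p ∩ E q) : ℝ) - c ^ 2 / N) ≤ 0 :=
    sum_nonpos fun q hq => sub_nonpos.2 <| hindep p hp q (mem_filter.1 hq).1 (mem_filter.1 hq).2
  rw [← sum_filter_add_sum_filter_not D (R p)]
  linarith

end SecondMoment

theorem card_filter_lt_sub_mul_sq_le {Ω : Type*} [Fintype Ω] (g : Ω → ℝ) {μ r : ℝ}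
    (hr : 0 ≤ r) : #{ω | g ω < μ - r} * r ^ 2 ≤ ∑ ω, (g ω - μ) ^ 2 := by
  rw [← nsmul_eq_mul, ← sum_const]
  calc ∑ ω with g ω < μ - r, r ^ 2 ≤ ∑ ω with g ω < μ - r, (g ω - μ) ^ 2 :=
        sum_le_sum fun ω hω => by nlinarith [(mem_filter.1 hω).2]
    _ ≤ ∑ ω, (g ω - μ) ^ 2 :=
        sum_le_sum_of_subset_of_nonneg (filter_subset _ _) fun _ _ _ => sq_nonneg _

theorem exists_forall_notMem_of_sum_card_lt {α ι : Type*} [Fintype α] [DecidableEq α]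
    (s : Finset ι) (B : ι → Finset α) (h : ∑ i ∈ s, #(B i) < Fintype.card α) :
    ∃ a, ∀ i ∈ s, a ∉ B i := by
  by_contra! hcover
  have : univ ⊆ s.biUnion B := fun a _ => by simpa using hcover a
  exact (card_le_card this |>.trans card_biUnion_le).not_gt h

theorem eight_mul_mul_sqrt_lt_one {ℓ k : ℕ} (hk : 2 ≤ k) {ε : ℝ} (hε : 0 < ε)
    (hε' : ε ≤ 1 / (9 * (ℓ : ℝ) ^ 2 * (k : ℝ) ^ 4)) : 8 * ℓ * √ε < 1 := by
  have hk₁₆ : (16 : ℝ) ≤ (k : ℝ) ^ 4 := by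
    have := pow_le_pow_left₀ (by norm_num) (show (2 : ℝ) ≤ k by exact_mod_cast hk) 4
    norm_num at this
    exact this
  have hε₉ : 9 * (ℓ : ℝ) ^ 2 * k ^ 4 * ε ≤ 1 := by
    rcases Nat.eq_zero_or_pos ℓ with rfl | hℓ
    · simp
    · rwa [le_div_iff₀' (by positivity)] at hε'
  have hsq : (8 * ℓ * √ε) ^ 2 < 1 := by
    rw [mul_pow, Real.sq_sqrt hε.le]
    nlinarith [mul_nonneg (sq_nonneg (ℓ : ℝ)) hε.le]
  exact (pow_lt_one_iff_of_nonneg (by positivity) two_ne_zero).1 hsq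

namespace SimpleGraph
variable {V : Type*} [Fintype V] [DecidableEq V] {G : SimpleGraph V}

abbrev Dart.Touches (d d' : G.Dart) : Prop :=
  d'.fst = d.fst ∨ d'.fst = d.snd ∨ d'.snd = d.fst ∨ d'.snd = d.snd

theorem card_filter_dart_apply_eq_and_le_of_not_touches {k : ℕ} (hk : k ≠ 0) {d d' : G.Dart}
    (hdd' : ¬ d.Touches d') (s t : Fin k) :
    (#{f : V → Fin k | (f d.fst = s ∧ f d.snd = t) ∧ (f d'.fst = s ∧ f d'.snd = t)} : ℝ) ≤
      k ^ Fintype.card V / k ^ 4 := by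
  simp only [Dart.Touches, not_or] at hdd'
  obtain ⟨h₁, h₂, h₃, h₄⟩ := hdd'
  have hcount := card_filter_mul_pow_le_of_eqOn (β := Fin k)
    (P := fun f => (f d.fst = s ∧ f d.snd = t) ∧ (f d'.fst = s ∧ f d'.snd = t))
    {d.fst, d.snd, d'.fst, d'.snd} (by
      rintro f g ⟨⟨hf₁, hf₂⟩, hf₃, hf₄⟩ ⟨⟨hg₁, hg₂⟩, hg₃, hg₄⟩ v hv
      simp only [coe_insert, coe_singleton, Set.mem_insert_iff, Set.mem_singleton_iff] at hv
      rcases hv with rfl | rfl | rfl | rfl <;> simp_all)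
  rw [card_insert_of_notMem (by simp [d.fst_ne_snd, Ne.symm h₁, Ne.symm h₃]),
    card_insert_of_notMem (by simp [Ne.symm h₂, Ne.symm h₄]), card_pair d'.fst_ne_snd,
    Fintype.card_fin] at hcount
  rw [le_div_iff₀ (by positivity)]
  exact_mod_cast hcount

variable (G) [DecidableRel G.Adj] {k : ℕ}

theorem dart_snd_fiber_card_eq_degree (v : V) : #{d : G.Dart | d.snd = v} = G.degree v := by
  rw [← dart_fst_fiber_card_eq_degree]
  exact card_bij' (fun d _ => d.symm) (fun d _ => d.symm) (by simp) (by simp) (by simp) (by simp)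

theorem card_dart_touches_le (d : G.Dart) : #{d' : G.Dart | d.Touches d'} ≤ 4 * G.maxDegree := by
  simp only [Dart.Touches, filter_or]
  grw [card_union_le, card_union_le, card_union_le, dart_fst_fiber_card_eq_degree,
    dart_fst_fiber_card_eq_degree, dart_snd_fiber_card_eq_degree, dart_snd_fiber_card_eq_degree,
    degree_le_maxDegree, degree_le_maxDegree]
  omega

theorem card_dart_fst_mem_snd_mem_eq_eBetween {A B : Finset V} (hAB : Disjoint A B) :
    #{d : G.Dart | d.fst ∈ A ∧ d.snd ∈ B} = eBetween G A B := by
  refine card_bij (fun d _ => d.edge) (fun d hd => ?_) (fun d hd d' hd' h => ?_) fun e he => ?_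
  · simp only [mem_filter, mem_univ, true_and, mem_edgeFinset] at hd ⊢
    exact ⟨d.edge_mem, d.fst, hd.1, d.snd, hd.2, rfl⟩
  · simp only [mem_filter, mem_univ, true_and] at hd hd'
    refine ((dart_edge_eq_iff d d').1 h).resolve_right fun hsymm => ?_
    subst hsymm
    exact Finset.disjoint_left.1 hAB hd.1 hd'.2
  · simp only [mem_filter, mem_edgeFinset] at he
    obtain ⟨hadj, a, ha, b, hb, rfl⟩ := he
    exact ⟨⟨(a, b), hadj⟩, by simpa using ⟨ha, hb⟩, rfl⟩

theorem card_dart_fst_mem_snd_mem_eq_two_mul_eWithin (S : Finset V) :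
    #{d : G.Dart | d.fst ∈ S ∧ d.snd ∈ S} = 2 * eWithin G S := by
  rw [eWithin, mul_comm, card_eq_sum_card_fiberwise (f := Dart.edge)
    (t := {e ∈ G.edgeFinset | ∀ v ∈ e, v ∈ S}), ← smul_eq_mul, ← sum_const]
  · refine sum_congr rfl fun e he => ?_
    simp only [mem_filter, mem_edgeFinset] at he
    rw [← G.dart_edge_fiber_card e he.1]
    congr 1
    ext d
    simp only [mem_filter, mem_univ, true_and, and_iff_right_iff_imp]
    rintro rfl
    exact ⟨he.2 _ (Sym2.mem_mk_left _ _), he.2 _ (Sym2.mem_mk_right _ _)⟩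
  · intro d hd
    simp only [coe_filter, mem_univ, true_and, Set.mem_ofPred_eq, mem_edgeFinset] at hd ⊢
    refine ⟨d.edge_mem, fun v hv => ?_⟩
    rcases Sym2.mem_iff.1 hv with rfl | rfl
    exacts [hd.1, hd.2]

theorem sum_card_dart_sub_sq_le (hk : k ≠ 0) (s t : Fin k) :
    ∑ f : V → Fin k,
        ((#{d : G.Dart | f d.fst = s ∧ f d.snd = t} : ℝ) - 2 * #G.edgeFinset / k ^ 2) ^ 2 ≤
      8 * (#G.edgeFinset : ℝ) * G.maxDegree * k ^ Fintype.card V / k ^ 2 := by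
  have : NeZero k := ⟨hk⟩
  have hN : (Fintype.card (V → Fin k) : ℝ) = k ^ Fintype.card V := by simp
  have hD : (#(univ : Finset G.Dart) : ℝ) = 2 * #G.edgeFinset := by
    rw [card_univ, dart_card_eq_twice_card_edges]
    push_cast
    rfl
  have hvar := sum_card_filter_mem_sub_sq_le univ
    (fun d : G.Dart => {f : V → Fin k | f d.fst = s ∧ f d.snd = t}) Dart.Touches
    (c := (k : ℝ) ^ Fintype.card V / k ^ 2) (τ := 4 * G.maxDegree)
    (fun d _ => card_filter_apply_eq_and_apply_eq hk d.fst_ne_snd s t)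
    (fun d _ d' _ hdd' => by
      rw [← filter_and, hN]
      refine (card_filter_dart_apply_eq_and_le_of_not_touches hk hdd' s t).trans_eq ?_
      field_simp)
    (fun d _ => by exact_mod_cast G.card_dart_touches_le d)
  simp only [mem_filter, mem_univ, true_and, hD, hN] at hvar
  convert hvar using 4
  · field_simp
  · ring

theorem card_filter_card_dart_lt_le (hk : k ≠ 0) {ε : ℝ} (hε : 0 < ε)
    (hΔ : (G.maxDegree : ℝ) ≤ ε * #G.edgeFinset) (s t : Fin k) :
    (#{f : V → Fin k | (#{d : G.Dart | f d.fst = s ∧ f d.snd = t} : ℝ) <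
        2 * #G.edgeFinset / k ^ 2 - ε ^ ((1 : ℝ) / 4) * #G.edgeFinset} : ℝ) ≤
      8 * √ε * k ^ Fintype.card V / k ^ 2 := by
  set m : ℝ := (#G.edgeFinset : ℝ)
  set X : (V → Fin k) → ℝ := fun f => #{d : G.Dart | f d.fst = s ∧ f d.snd = t}
  set r := ε ^ ((1 : ℝ) / 4) * m
  obtain hm | hm := (Nat.cast_nonneg _ : (0 : ℝ) ≤ m).eq_or_lt
  · have hempty : ({f | X f < 2 * m / k ^ 2 - r} : Finset (V → Fin k)) = ∅ :=
      filter_false_of_mem fun f _ => by simp [r, X, m, ← hm]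
    rw [hempty, card_empty, Nat.cast_zero]
    positivity
  have hr : r ^ 2 = √ε * m ^ 2 := by
    rw [mul_pow, ← Real.rpow_natCast, ← Real.rpow_mul hε.le, Real.sqrt_eq_rpow]
    norm_num
  refine le_of_mul_le_mul_right ?_ (by positivity : 0 < √ε * m ^ 2)
  calc (#{f | X f < 2 * m / k ^ 2 - r} : ℝ) * (√ε * m ^ 2)
      = #{f | X f < 2 * m / k ^ 2 - r} * r ^ 2 := by rw [hr]
    _ ≤ ∑ f, (X f - 2 * m / k ^ 2) ^ 2 := card_filter_lt_sub_mul_sq_le X (by positivity)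
    _ ≤ 8 * m * G.maxDegree * k ^ Fintype.card V / k ^ 2 := sum_card_dart_sub_sq_le G hk s t
    _ ≤ 8 * m * (ε * m) * k ^ Fintype.card V / k ^ 2 := by gcongr
    _ = 8 * √ε * k ^ Fintype.card V / k ^ 2 * (√ε * m ^ 2) := by
      linear_combination (-8 * m ^ 2 * k ^ Fintype.card V / k ^ 2) * Real.mul_self_sqrt hε.le

end SimpleGraph

theorem exists_colouring_forall_card_dart_ge {V : Type*} [Fintype V] [DecidableEq V] {k ℓ : ℕ}
    (hk : 2 ≤ k) {ε : ℝ} (hε : 0 < ε) (hε' : ε ≤ 1 / (9 * (ℓ : ℝ) ^ 2 * (k : ℝ) ^ 4))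
    (G : Fin ℓ → SimpleGraph V) [∀ i, DecidableRel (G i).Adj]
    (hΔ : ∀ i, ((G i).maxDegree : ℝ) ≤ ε * #(G i).edgeFinset) :
    ∃ f : V → Fin k, ∀ i s t, 2 * #(G i).edgeFinset / (k : ℝ) ^ 2 -
      ε ^ ((1 : ℝ) / 4) * #(G i).edgeFinset ≤ #{d : (G i).Dart | f d.fst = s ∧ f d.snd = t} := by
  let bad : Fin ℓ × Fin k × Fin k → Finset (V → Fin k) := fun x =>
    {f | (#{d : (G x.1).Dart | f d.fst = x.2.1 ∧ f d.snd = x.2.2} : ℝ) <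
      2 * #(G x.1).edgeFinset / (k : ℝ) ^ 2 - ε ^ ((1 : ℝ) / 4) * #(G x.1).edgeFinset}
  have hbad : ∑ x, (#(bad x) : ℝ) < k ^ Fintype.card V :=
    calc ∑ x, (#(bad x) : ℝ)
        ≤ ∑ _x : Fin ℓ × Fin k × Fin k, 8 * √ε * k ^ Fintype.card V / k ^ 2 :=
          sum_le_sum fun x _ => (G x.1).card_filter_card_dart_lt_le (by omega) hε (hΔ x.1) _ _
      _ = 8 * ℓ * √ε * k ^ Fintype.card V := by
          simp only [sum_const, card_univ, Fintype.card_prod, Fintype.card_fin, nsmul_eq_mul]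
          field_simp
          push_cast
          ring
      _ < k ^ Fintype.card V :=
          mul_lt_of_lt_one_left (by positivity) (eight_mul_mul_sqrt_lt_one hk hε hε')
  obtain ⟨f, hf⟩ := exists_forall_notMem_of_sum_card_lt univ bad <| by
    simpa using (mod_cast hbad : ∑ x, #(bad x) < k ^ Fintype.card V)
  exact ⟨f, fun i s t => by simpa [bad] using hf (i, s, t) (mem_univ _)⟩

/-- Let `k ≥ 2` and `0 < ε ≤ 1/(9ℓ²k⁴)`. Given graphs `G 1, …, G ℓ` on the same
finite vertex set, where `G i` has `m i` edges and maximum degree at most `ε * m i`,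
there is a partition of `V` into `k` classes `P 1, …, P k` such that for all `i`
and all `s ≠ t` we have `e_{G i}(P s, P t) ≥ 2 m i / k² - ε^{1/4} m i` and
for all `i, s` we have `e_{G i}(P s) ≥ m i / k² - ε^{1/4} m i`. -/
theorem simultaneous_kpartition_pairs {V : Type*} [Fintype V] [DecidableEq V]
    (k ℓ : ℕ) (hk : 2 ≤ k) (ε : ℝ) (hε : 0 < ε)
    (hε' : ε ≤ 1 / (9 * (ℓ : ℝ) ^ 2 * (k : ℝ) ^ 4))
    (G : Fin ℓ → SimpleGraph V) [∀ i, DecidableRel (G i).Adj]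
    (m : Fin ℓ → ℕ) (hm : ∀ i, (G i).edgeFinset.card = m i)
    (hΔ : ∀ i, ((G i).maxDegree : ℝ) ≤ ε * m i) :
    ∃ P : Fin k → Finset V,
      (∀ s t : Fin k, s ≠ t → Disjoint (P s) (P t)) ∧
      Finset.univ.biUnion P = Finset.univ ∧
      (∀ i, ∀ s t : Fin k, s ≠ t →
        (eBetween (G i) (P s) (P t) : ℝ) ≥
          2 * m i / (k : ℝ) ^ 2 - ε ^ ((1 : ℝ) / 4) * m i) ∧
      (∀ i, ∀ s : Fin k,
        (eWithin (G i) (P s) : ℝ) ≥ (m i : ℝ) / (k : ℝ) ^ 2 - ε ^ ((1 : ℝ) / 4) * m i) := by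
  obtain ⟨f, hf⟩ := exists_colouring_forall_card_dart_ge (k := k) hk hε hε' G fun i => hm i ▸ hΔ i
  set P : Fin k → Finset V := fun s => {v | f v = s}
  have hdisj : ∀ s t, s ≠ t → Disjoint (P s) (P t) :=
    fun s t hst => disjoint_filter.2 fun v _ hs ht => hst (hs.symm.trans ht)
  have hgood : ∀ i s t, 2 * m i / (k : ℝ) ^ 2 - ε ^ ((1 : ℝ) / 4) * m i ≤
      #{d : (G i).Dart | d.fst ∈ P s ∧ d.snd ∈ P t} := fun i s t => by
    simpa [P, hm] using hf i s t
  refine ⟨P, hdisj, ?_, fun i s t hst => ?_, fun i s => ?_⟩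
  · ext v
    simp [P]
  · rw [← (G i).card_dart_fst_mem_snd_mem_eq_eBetween (hdisj s t hst)]
    exact hgood i s t
  · have hwithin := hgood i s s
    rw [(G i).card_dart_fst_mem_snd_mem_eq_two_mul_eWithin, Nat.cast_mul, Nat.cast_two] at hwithin
    have : 0 ≤ ε ^ ((1 : ℝ) / 4) * m i := by positivity
    linarith [mul_div_assoc (2 : ℝ) (m i) ((k : ℝ) ^ 2)]
end

section
/- Let c be a real number with c > 1/2 and let G be a graph with m edges on a finite vertex set V. Consider the random bipartition of V into classes A and B obtained by placing each vertex of V into A with probability 1/2 independently of all other vertices. Then with probability at least 1 − 1/(2c), the number of edges of G with one endvertex in A and the other in B is at least m/2 − √(c·m/2). -/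
open Finset

private def sgn {V : Type*} (f : V → Fin 2) (e : Sym2 V) : ℤ :=
  if (e.map f).IsDiag then -1 else 1

private lemma fin2_succ_succ : ∀ a : Fin 2, a + 1 + 1 = a := by decide
private lemma fin2_succ_ne : ∀ a : Fin 2, ¬ a + 1 = a := by decide
private lemma fin2_succ_eq_iff : ∀ a b : Fin 2, (a + 1 = b ↔ ¬ a = b) := by decide
private lemma fin2_cases : ∀ a : Fin 2, a = 0 ∨ a = 1 := by decide

private def flip' {V : Type*} [DecidableEq V] (w : V) (f : V → Fin 2) : V → Fin 2 :=
  Function.update f w (f w + 1)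

private lemma flip'_apply_ne {V : Type*} [DecidableEq V] (w : V) (f : V → Fin 2)
    {x : V} (h : x ≠ w) : flip' w f x = f x := Function.update_of_ne h _ f

private lemma flip'_apply {V : Type*} [DecidableEq V] (w : V) (f : V → Fin 2) :
    flip' w f w = f w + 1 := Function.update_self _ _ _

private lemma flip'_flip' {V : Type*} [DecidableEq V] (w : V) (f : V → Fin 2) :
    flip' w (flip' w f) = f := by
  funext x
  by_cases h : x = w
  · subst h
    rw [flip'_apply, flip'_apply, fin2_succ_succ]
  · rw [flip'_apply_ne _ _ h, flip'_apply_ne _ _ h]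

private lemma flip'_ne {V : Type*} [DecidableEq V] (w : V) (f : V → Fin 2) :
    flip' w f ≠ f := by
  intro h
  have := congrFun h w
  rw [flip'_apply] at this
  exact fin2_succ_ne _ this

private lemma sgn_flip'_mem {V : Type*} [DecidableEq V] (w : V) (f : V → Fin 2)
    (e : Sym2 V) (hw : w ∈ e) (hd : ¬ e.IsDiag) :
    sgn (flip' w f) e = - sgn f e := by
  induction e using Sym2.ind with
  | _ x y =>
    rw [Sym2.mk_isDiag_iff] at hd
    rw [Sym2.mem_iff] at hw
    have key : ∀ u v : V, u ≠ v → sgn (flip' u f) s(u, v) = - sgn f s(u, v) := by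
      intro u v huv
      simp only [sgn, Sym2.map_pair_eq, Sym2.mk_isDiag_iff,
        flip'_apply, flip'_apply_ne _ _ (Ne.symm huv)]
      by_cases h : f u = f v
      · rw [if_pos h, if_neg (fun h' => ((fin2_succ_eq_iff _ _).mp h') h)]
        norm_num
      · rw [if_neg h, if_pos ((fin2_succ_eq_iff _ _).mpr h)]
    rcases hw with rfl | rfl
    · exact key _ _ hd
    · rw [Sym2.eq_swap]
      exact key _ _ (Ne.symm hd)

private lemma sgn_flip'_notMem {V : Type*} [DecidableEq V] (w : V) (f : V → Fin 2)
    (e : Sym2 V) (hw : w ∉ e) : sgn (flip' w f) e = sgn f e := by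
  induction e using Sym2.ind with
  | _ x y =>
    rw [Sym2.mem_iff] at hw
    push_neg at hw
    simp only [sgn, Sym2.map_pair_eq,
      flip'_apply_ne _ _ (Ne.symm hw.1), flip'_apply_ne _ _ (Ne.symm hw.2)]

private lemma exists_mem_not_mem {V : Type*} (e e' : Sym2 V) (hne : e ≠ e')
    (hd : ¬ e.IsDiag) : ∃ w, w ∈ e ∧ w ∉ e' := by
  induction e using Sym2.ind with
  | _ u v =>
    rw [Sym2.mk_isDiag_iff] at hd
    by_cases hu : u ∈ e'
    · by_cases hv : v ∈ e'
      · exfalso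
        apply hne
        induction e' using Sym2.ind with
        | _ x y =>
          rw [Sym2.mem_iff] at hu hv
          rcases hu with rfl | rfl <;> rcases hv with rfl | rfl
          · exact absurd rfl hd
          · rfl
          · exact Sym2.eq_swap
          · exact absurd rfl hd
      · exact ⟨v, Sym2.mem_mk_right _ _, hv⟩
    · exact ⟨u, Sym2.mem_mk_left _ _, hu⟩

private lemma sum_sgn_mul_sgn {V : Type*} [Fintype V] [DecidableEq V]
    (G : SimpleGraph V) [DecidableRel G.Adj] {e e' : Sym2 V}
    (he : e ∈ G.edgeFinset) (_he' : e' ∈ G.edgeFinset) (hne : e ≠ e') :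
    ∑ f : V → Fin 2, sgn f e * sgn f e' = 0 := by
  have hd : ¬ e.IsDiag :=
    G.not_isDiag_of_mem_edgeSet (SimpleGraph.mem_edgeFinset.mp he)
  obtain ⟨w, hw, hw'⟩ := exists_mem_not_mem e e' hne hd
  refine Finset.sum_involution (fun f _ => flip' w f) ?_ ?_ (fun f _ => Finset.mem_univ _)
    (fun f _ => flip'_flip' w f)
  · intro f _
    rw [sgn_flip'_mem w f e hw hd, sgn_flip'_notMem w f e' hw']
    ring
  · intro f _ _
    exact flip'_ne w f

private lemma sgn_mul_self {V : Type*} (f : V → Fin 2) (e : Sym2 V) :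
    sgn f e * sgn f e = 1 := by
  unfold sgn; split <;> norm_num

private lemma sum_sq_sum_sgn {V : Type*} [Fintype V] [DecidableEq V]
    (G : SimpleGraph V) [DecidableRel G.Adj] :
    ∑ f : V → Fin 2, (∑ e ∈ G.edgeFinset, sgn f e) ^ 2 =
      (G.edgeFinset.card : ℤ) * 2 ^ Fintype.card V := by
  have h1 : ∀ f : V → Fin 2, (∑ e ∈ G.edgeFinset, sgn f e) ^ 2 =
      ∑ e ∈ G.edgeFinset, ∑ e' ∈ G.edgeFinset, sgn f e * sgn f e' := by
    intro f; rw [sq, Finset.sum_mul_sum]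
  simp only [h1]
  rw [Finset.sum_comm]
  have h2 : ∀ e ∈ G.edgeFinset, ∑ f : V → Fin 2, ∑ e' ∈ G.edgeFinset, sgn f e * sgn f e'
      = 2 ^ Fintype.card V := by
    intro e he
    rw [Finset.sum_comm]
    have h3 : ∀ e' ∈ G.edgeFinset, (∑ f : V → Fin 2, sgn f e * sgn f e') =
        if e = e' then (2 : ℤ) ^ Fintype.card V else 0 := by
      intro e' he'
      by_cases h : e = e'
      · subst h
        rw [if_pos rfl]
        simp only [sgn_mul_self]
        rw [Finset.sum_const, Finset.card_univ, Fintype.card_fun]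
        simp
      · rw [if_neg h, sum_sgn_mul_sgn G he he' h]
    rw [Finset.sum_congr rfl h3, Finset.sum_ite_eq, if_pos he]
  rw [Finset.sum_congr rfl h2, Finset.sum_const, nsmul_eq_mul]

private lemma eBetween_eq {V : Type*} [Fintype V] [DecidableEq V] (G : SimpleGraph V)
    [DecidableRel G.Adj] (f : V → Fin 2) :
    eBetween G (Finset.univ.filter fun v => f v = 0)
        (Finset.univ.filter fun v => f v = 1) =
      (G.edgeFinset.filter fun e => ¬ (e.map f).IsDiag).card := by
  unfold eBetween
  congr 1
  apply Finset.filter_congr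
  intro e he
  induction e using Sym2.ind with
  | _ u v =>
    simp only [Finset.mem_filter, Finset.mem_univ, true_and, Sym2.map_pair_eq,
      Sym2.mk_isDiag_iff]
    constructor
    · rintro ⟨a, ha, b, hb, hab⟩
      rw [Sym2.eq_iff] at hab
      rcases hab with ⟨rfl, rfl⟩ | ⟨rfl, rfl⟩ <;> rw [ha, hb] <;> decide
    · intro h
      rcases fin2_cases (f u) with hu | hu <;> rcases fin2_cases (f v) with hv | hv
      · exact absurd (hu.trans hv.symm) h
      · exact ⟨u, hu, v, hv, rfl⟩
      · exact ⟨v, hv, u, hu, Sym2.eq_swap⟩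
      · exact absurd (hu.trans hv.symm) h

private lemma sum_sgn_eq {V : Type*} [Fintype V] [DecidableEq V] (G : SimpleGraph V)
    [DecidableRel G.Adj] (f : V → Fin 2) :
    ∑ e ∈ G.edgeFinset, sgn f e =
      2 * ((G.edgeFinset.filter fun e => ¬ (e.map f).IsDiag).card : ℤ)
        - (G.edgeFinset.card : ℤ) := by
  classical
  rw [← Finset.sum_filter_add_sum_filter_not G.edgeFinset (fun e => ¬ (e.map f).IsDiag)]
  have h1 : ∀ e ∈ G.edgeFinset.filter (fun e => ¬ (e.map f).IsDiag), sgn f e = 1 := by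
    intro e he
    rw [Finset.mem_filter] at he
    exact if_neg he.2
  have h2 : ∀ e ∈ G.edgeFinset.filter (fun e => ¬ ¬ (e.map f).IsDiag), sgn f e = -1 := by
    intro e he
    rw [Finset.mem_filter] at he
    exact if_pos (not_not.mp he.2)
  rw [Finset.sum_congr rfl h1, Finset.sum_congr rfl h2, Finset.sum_const, Finset.sum_const]
  have h3 : (G.edgeFinset.filter (fun e => ¬ (e.map f).IsDiag)).card
      + (G.edgeFinset.filter (fun e => ¬ ¬ (e.map f).IsDiag)).card = G.edgeFinset.card :=
    Finset.card_filter_add_card_filter_not _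
  have := congrArg (Nat.cast (R := ℤ)) h3
  push_cast at this
  simp only [nsmul_eq_mul, mul_one, mul_neg_one]
  linarith

/-- Let `c > 1/2` and let `G` be a graph with `m` edges. For a uniformly random
`f : V → Fin 2` (all `2^|V|` assignments equally likely), with `A = f⁻¹ 0` and
`B = f⁻¹ 1`, the probability that `e_G(A,B) ≥ m/2 - √(c m/2)` is at least
`1 - 1/(2c)`. -/
theorem random_bipartition_cut {V : Type*} [Fintype V] [DecidableEq V]
    (G : SimpleGraph V) [DecidableRel G.Adj] (m : ℕ) (hm : G.edgeFinset.card = m)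
    (c : ℝ) (hc : 1 / 2 < c) :
    (Nat.card {f : V → Fin 2 //
        (eBetween G (Finset.univ.filter fun v => f v = 0)
            (Finset.univ.filter fun v => f v = 1) : ℝ) ≥
          (m : ℝ) / 2 - Real.sqrt (c * m / 2)} : ℝ) /
      (Fintype.card (V → Fin 2) : ℝ) ≥ 1 - 1 / (2 * c) := by
  classical
  have hc0 : (0 : ℝ) < c := by linarith
  set N : ℕ := Fintype.card (V → Fin 2) with hNdef
  have hNpos : 0 < N := Fintype.card_pos
  have hNpos' : (0 : ℝ) < N := by exact_mod_cast hNpos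
  set p : (V → Fin 2) → Prop := fun f =>
      (eBetween G (Finset.univ.filter fun v => f v = 0)
          (Finset.univ.filter fun v => f v = 1) : ℝ) ≥
        (m : ℝ) / 2 - Real.sqrt (c * m / 2) with hp
  have hcard : Nat.card {f : V → Fin 2 // p f} = (Finset.univ.filter p).card := by
    rw [Nat.card_eq_fintype_card, Fintype.card_subtype]
  have hsplit : (Finset.univ.filter p).card
      + (Finset.univ.filter fun f => ¬ p f).card = N := by
    rw [Finset.card_filter_add_card_filter_not, Finset.card_univ]
  set bad : Finset (V → Fin 2) := Finset.univ.filter fun f => ¬ p f with hbaddef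
  -- key bound: bad.card * (2c) ≤ N
  have hbad : (bad.card : ℝ) * (2 * c) ≤ N := by
    rcases Nat.eq_zero_or_pos m with hm0 | hmpos
    · have : bad = ∅ := by
        apply Finset.filter_false_of_mem
        intro f _
        rw [not_not, hp, hm0]
        simp only [Nat.cast_zero, zero_div, mul_zero, Real.sqrt_zero, sub_zero]
        positivity
      rw [this]
      simp only [Finset.card_empty, Nat.cast_zero, zero_mul]
      positivity
    · have hm' : (0 : ℝ) < m := by exact_mod_cast hmpos
      -- each bad f contributes at least 2cm to the sum of squares
      have hterm : ∀ f ∈ bad,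
          2 * c * (m : ℝ) ≤ ((∑ e ∈ G.edgeFinset, sgn f e : ℤ) : ℝ) ^ 2 := by
        intro f hf
        rw [hbaddef, Finset.mem_filter] at hf
        have hflt : ((eBetween G (Finset.univ.filter fun v => f v = 0)
            (Finset.univ.filter fun v => f v = 1) : ℕ) : ℝ) <
            (m : ℝ) / 2 - Real.sqrt (c * m / 2) := by
          have := hf.2
          rw [hp] at this
          exact not_le.mp this
        have hS : ((∑ e ∈ G.edgeFinset, sgn f e : ℤ) : ℝ) =
            2 * ((eBetween G (Finset.univ.filter fun v => f v = 0)
              (Finset.univ.filter fun v => f v = 1) : ℕ) : ℝ) - (m : ℝ) := by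
          rw [eBetween_eq, sum_sgn_eq, ← hm]
          push_cast
          ring
        have hsqrt0 : 0 ≤ Real.sqrt (c * m / 2) := Real.sqrt_nonneg _
        have hSlt : ((∑ e ∈ G.edgeFinset, sgn f e : ℤ) : ℝ) <
            -(2 * Real.sqrt (c * m / 2)) := by
          rw [hS]; linarith
        have hsq : (2 * Real.sqrt (c * m / 2)) ^ 2 = 2 * c * m := by
          rw [mul_pow, Real.sq_sqrt (by positivity)]
          ring
        nlinarith [sq_nonneg (((∑ e ∈ G.edgeFinset, sgn f e : ℤ) : ℝ)
          + 2 * Real.sqrt (c * m / 2))]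
      have hsum : (bad.card : ℝ) * (2 * c * m) ≤ (m : ℝ) * N := by
        calc (bad.card : ℝ) * (2 * c * m)
            = ∑ _f ∈ bad, 2 * c * (m : ℝ) := by
              rw [Finset.sum_const, nsmul_eq_mul]
          _ ≤ ∑ f ∈ bad, ((∑ e ∈ G.edgeFinset, sgn f e : ℤ) : ℝ) ^ 2 :=
              Finset.sum_le_sum hterm
          _ ≤ ∑ f : V → Fin 2, ((∑ e ∈ G.edgeFinset, sgn f e : ℤ) : ℝ) ^ 2 :=
              Finset.sum_le_sum_of_subset_of_nonneg (Finset.subset_univ _)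
                (fun f _ _ => sq_nonneg _)
          _ = (m : ℝ) * N := by
              have h0 := sum_sq_sum_sgn G
              rw [hm] at h0
              have h2 := congrArg (Int.cast (R := ℝ)) h0
              push_cast at h2 ⊢
              rw [h2, hNdef, Fintype.card_fun]
              push_cast
              norm_num
      nlinarith
  -- finish
  rw [hcard]
  have hgood : ((Finset.univ.filter p).card : ℝ) = (N : ℝ) - (bad.card : ℝ) := by
    have := congrArg (Nat.cast (R := ℝ)) hsplit
    push_cast at this
    linarith
  rw [hgood, ge_iff_le, sub_div, div_self hNpos'.ne']
  have h2 : (bad.card : ℝ) / N ≤ 1 / (2 * c) := by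
    rw [div_le_div_iff₀ hNpos' (by linarith)]
    linarith
  linarith
end
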